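/- arXiv:1206.6605 — 2 statements merged into one kernel-verified Lean document; each statement's English description precedes it below -/
import Mathlib

section
/- For the path P_n with vertices 0,1,...,n and starting vertex r, the sum over all vertices k of the hitting times H_r(k) equals n(n+1)(2n+1)/6 + r(n-r). -/
/-!
A nonnegative `φ` with `φ x = 0` and `φ w = 1 + ∑ z, P(w, z) φ z` for `w ≠ x` is the hitting
time `H_·(x)`. Writing `S t = P_r(τ_x > t)`, one step of the walk gives
`∑_{s<t} S s + E_r[φ(X_t); τ_x > t] = φ r`; the second term is at most `(max φ) S t`, so `S` is
summable with sum `φ r`. Since `S` is antitone and summable, `t S t → 0`, and the tail-sum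
formula `E_r τ_x = ∑_t S t` follows. On the path `φ z = x² - z² + 2n (z - x)⁺` solves these
equations, and summing it over `x` is elementary.
-/

open Finset

variable {V : Type*} [Fintype V] [DecidableEq V]

/-- One-step transition probability of simple random walk on `G`:
from `x`, move to a uniformly random neighbour. -/
noncomputable def SimpleGraph.step (G : SimpleGraph V) [DecidableRel G.Adj] (x y : V) : ℝ :=
  if G.Adj x y then ((G.degree x : ℝ))⁻¹ else 0

/-- `G.firstHitProb t r x`: probability that the first visit to `x` of simple random walk
started at `r` occurs at time `t` (time `0` counts as a visit). -/
noncomputable def SimpleGraph.firstHitProb (G : SimpleGraph V) [DecidableRel G.Adj] :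
    ℕ → V → V → ℝ
  | 0, r, x => if r = x then 1 else 0
  | (t+1), r, x => if r = x then 0 else ∑ z, G.step r z * G.firstHitProb t z x

/-- `G.hitTime r x`: expected hitting time `H_r(x)` of `x` for simple random walk from `r`. -/
noncomputable def SimpleGraph.hitTime (G : SimpleGraph V) [DecidableRel G.Adj] (r x : V) : ℝ :=
  ∑' t : ℕ, (t : ℝ) * G.firstHitProb t r x

/-- `G.firstInProb t r x y`: probability that the first visit of the walk from `r`
to the set `{x, y}` occurs at time `t` and is a visit to `x` (time `0` counts). -/
noncomputable def SimpleGraph.firstInProb (G : SimpleGraph V) [DecidableRel G.Adj] :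
    ℕ → V → V → V → ℝ
  | 0, r, x, _ => if r = x then 1 else 0
  | (t+1), r, x, y => if r = x ∨ r = y then 0 else ∑ z, G.step r z * G.firstInProb t z x y

/-- `G.probBefore r x y` = `p_r(x<y)`: probability that random walk from `r` visits `x`
strictly before `y` (visiting `x` at time `0` counts, so `p_r(r<y) = 1`). -/
noncomputable def SimpleGraph.probBefore (G : SimpleGraph V) [DecidableRel G.Adj]
    (r x y : V) : ℝ :=
  ∑' t : ℕ, G.firstInProb t r x y

/-- `G.escProb x y` = `p_{xy}`: probability that random walk from `x` visits `y` before
returning to `x` (i.e. before visiting `x` again at a positive time). -/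
noncomputable def SimpleGraph.escProb (G : SimpleGraph V) [DecidableRel G.Adj] (x y : V) : ℝ :=
  ∑ z, G.step x z * G.probBefore z y x

/-- `G.avoidProb y t z x`: probability that the walk started at `z` is at `x` at time `t`
and has not visited `y` at any time `≤ t`. -/
noncomputable def SimpleGraph.avoidProb (G : SimpleGraph V) [DecidableRel G.Adj] (y : V) :
    ℕ → V → V → ℝ
  | 0, z, x => if z = y then 0 else if z = x then 1 else 0
  | (t+1), z, x => if z = y then 0 else ∑ w, G.step z w * G.avoidProb y t w x

/-- `G.visitsBefore x y` = `V_x^{†y}`: expected number of visits to `x` (counting time `0`)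
of the walk started at `x` strictly before the first visit to `y`. -/
noncomputable def SimpleGraph.visitsBefore (G : SimpleGraph V) [DecidableRel G.Adj]
    (x y : V) : ℝ :=
  ∑' t : ℕ, G.avoidProb y t x x

/-- `G.coverDist r t (v, S)`: probability that the walk started at `r` is at `v` at time `t`
with `S` being the set of vertices visited so far. -/
noncomputable def SimpleGraph.coverDist (G : SimpleGraph V) [DecidableRel G.Adj] (r : V) :
    ℕ → V × Finset V → ℝ
  | 0, p => if p = (r, {r}) then 1 else 0
  | (t+1), p => ∑ q : V × Finset V,
      (if p.2 = insert p.1 q.2 then G.step q.1 p.1 else 0) * G.coverDist r t q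

/-- `G.coverTime r` = `CT_r(G)`: the expected number of steps of a cover tour of the walk
started at `r` (the walk stops once all vertices have been visited). -/
noncomputable def SimpleGraph.coverTime (G : SimpleGraph V) [DecidableRel G.Adj] (r : V) : ℝ :=
  ∑' t : ℕ, ∑ p : V × Finset V, if p.2 ≠ Finset.univ then G.coverDist r t p else 0

/-- `G.coverCost r` = `cc_r(G)`: the expected total cost of a cover tour from `r`, where a
step taken when `k` vertices other than `r` have been visited so far costs `1 - k / n`,
with `n = |V| - 1`. -/
noncomputable def SimpleGraph.coverCost (G : SimpleGraph V) [DecidableRel G.Adj] (r : V) : ℝ :=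
  ∑' t : ℕ, ∑ p : V × Finset V,
    if p.2 ≠ Finset.univ then
      G.coverDist r t p * (1 - ((p.2.erase r).card : ℝ) / ((Fintype.card V : ℝ) - 1))
    else 0

/-- `G.chargeD r x` = `D(x)`: the expected total charge departing from `x`, for the particle
started at `r` with charge `1` whose charge drops by `1/n` at each first visit to a vertex
other than `r` (it stops when the charge reaches `0`, i.e. when all vertices are covered). -/
noncomputable def SimpleGraph.chargeD (G : SimpleGraph V) [DecidableRel G.Adj] (r x : V) : ℝ :=
  ∑' t : ℕ, ∑ S : Finset V,
    if S ≠ Finset.univ then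
      G.coverDist r t (x, S) * (1 - ((S.erase r).card : ℝ) / ((Fintype.card V : ℝ) - 1))
    else 0

/-- The path graph on vertices `0, 1, …, n`, consecutive integers being adjacent. -/
def pathG (n : ℕ) : SimpleGraph (Fin (n+1)) where
  Adj i j := (i : ℕ) + 1 = j ∨ (j : ℕ) + 1 = i
  symm := ⟨fun i j h => h.symm⟩
  loopless := ⟨fun i h => by rcases h with h | h <;> omega⟩

instance (n : ℕ) : DecidableRel (pathG n).Adj :=
  fun i j => inferInstanceAs (Decidable ((i : ℕ) + 1 = j ∨ (j : ℕ) + 1 = i))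

/-- The star graph with center `0` and `n` leaves `1, …, n`. -/
def starG (n : ℕ) : SimpleGraph (Fin (n+1)) where
  Adj i j := i ≠ j ∧ (i = 0 ∨ j = 0)
  symm := ⟨fun i j h => ⟨h.1.symm, h.2.symm⟩⟩
  loopless := ⟨fun i h => h.1 rfl⟩

instance (n : ℕ) : DecidableRel (starG n).Adj :=
  fun i j => inferInstanceAs (Decidable (i ≠ j ∧ (i = 0 ∨ j = 0)))

open Filter Topology

theorem Antitone.tendsto_nat_mul_of_summable {a : ℕ → ℝ} (ha : Antitone a) (hs : Summable a) :
    Tendsto (fun n : ℕ => (n : ℝ) * a n) atTop (𝓝 0) := by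
  have ha0 : ∀ n, 0 ≤ a n := fun n => ha.le_of_tendsto hs.tendsto_atTop_zero n
  set S : ℕ → ℝ := fun n => ∑ i ∈ range n, a i
  -- the `n - n / 2` terms of index in `[n / 2, n)` are all at least `a n`
  have hbound : ∀ n : ℕ, (n : ℝ) * a n ≤ 2 * (S n - S (n / 2)) := by
    intro n
    have hcard : (n : ℝ) ≤ 2 * ((n - n / 2 : ℕ) : ℝ) := by
      rw [Nat.cast_sub (Nat.div_le_self n 2)]
      have := Nat.cast_div_le (m := n) (n := 2) (α := ℝ)
      push_cast at this ⊢
      linarith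
    have hsum : ((n - n / 2 : ℕ) : ℝ) * a n ≤ S n - S (n / 2) := by
      rw [← Finset.sum_Ico_eq_sub _ (Nat.div_le_self n 2), ← Nat.card_Ico, ← nsmul_eq_mul]
      exact Finset.card_nsmul_le_sum _ _ _ fun i hi => ha (Finset.mem_Ico.mp hi).2.le
    nlinarith [ha0 n]
  have hS := hs.hasSum.tendsto_sum_nat
  have hhalf : Tendsto (fun n : ℕ => n / 2) atTop atTop :=
    Nat.tendsto_div_const_atTop two_ne_zero
  have hlim : Tendsto (fun n => 2 * (S n - S (n / 2))) atTop (𝓝 0) := by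
    simpa using (hS.sub (hS.comp hhalf)).const_mul 2
  exact squeeze_zero (fun n => mul_nonneg n.cast_nonneg (ha0 n)) hbound hlim

section Step

variable {W : Type*} [Fintype W] (G : SimpleGraph W) [DecidableRel G.Adj]

lemma SimpleGraph.step_nonneg (x y : W) : 0 ≤ G.step x y := by
  unfold SimpleGraph.step
  split_ifs <;> positivity

lemma SimpleGraph.sum_step_mul (w : W) (g : W → ℝ) :
    ∑ z, G.step w z * g z = ((G.degree w : ℝ))⁻¹ * ∑ z ∈ G.neighborFinset w, g z := by
  rw [Finset.mul_sum, SimpleGraph.neighborFinset_eq_filter, Finset.sum_filter]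
  refine Finset.sum_congr rfl fun z _ => ?_
  unfold SimpleGraph.step
  split_ifs <;> simp

lemma SimpleGraph.sum_step {w : W} (hw : 0 < G.degree w) : ∑ z, G.step w z = 1 := by
  simpa [hw.ne'] using G.sum_step_mul w 1

end Step

namespace SimpleGraph

variable (G : SimpleGraph V) [DecidableRel G.Adj]

lemma firstHitProb_nonneg (t : ℕ) (r x : V) : 0 ≤ G.firstHitProb t r x := by
  induction t generalizing r with
  | zero => unfold firstHitProb; split_ifs <;> norm_num
  | succ t ih =>
    unfold firstHitProb
    split_ifs
    · rfl
    · exact Finset.sum_nonneg fun w _ => mul_nonneg (G.step_nonneg _ _) (ih w)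

lemma avoidProb_nonneg (y : V) (t : ℕ) (z x : V) : 0 ≤ G.avoidProb y t z x := by
  induction t generalizing z with
  | zero => unfold avoidProb; split_ifs <;> norm_num
  | succ t ih =>
    unfold avoidProb
    split_ifs
    · rfl
    · exact Finset.sum_nonneg fun w _ => mul_nonneg (G.step_nonneg _ _) (ih w)

@[simp]
lemma avoidProb_start_self (y : V) (t : ℕ) (x : V) : G.avoidProb y t y x = 0 := by
  cases t <;> simp [avoidProb]

@[simp]
lemma avoidProb_end_self (y : V) (t : ℕ) (z : V) : G.avoidProb y t z y = 0 := by
  induction t generalizing z with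
  | zero => simp +contextual [avoidProb]
  | succ t ih => simp [avoidProb, ih]

lemma avoidProb_zero_of_ne {y x : V} (hx : x ≠ y) (z : V) :
    G.avoidProb y 0 z x = if z = x then 1 else 0 := by
  unfold avoidProb
  split_ifs <;> simp_all

lemma avoidProb_succ_of_ne {y r : V} (hr : r ≠ y) (t : ℕ) (z : V) :
    G.avoidProb y (t+1) r z = ∑ w, G.step r w * G.avoidProb y t w z :=
  if_neg hr

lemma sum_avoidProb_zero_mul (y r : V) (g : V → ℝ) :
    ∑ w, G.avoidProb y 0 r w * g w = if r = y then 0 else g r := by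
  split_ifs with hr
  · simp [hr]
  · simp [avoidProb, hr]

lemma avoidProb_succ_eq_sum (y : V) (t : ℕ) (r z : V) :
    G.avoidProb y (t+1) r z = if z = y then 0 else ∑ w, G.avoidProb y t r w * G.step w z := by
  by_cases hz : z = y
  · simp [hz]
  rw [if_neg hz]
  induction t generalizing r with
  | zero =>
    rw [sum_avoidProb_zero_mul]
    by_cases hr : r = y
    · simp [hr]
    · simp [G.avoidProb_succ_of_ne hr, G.avoidProb_zero_of_ne hz, hr]
  | succ t ih =>
    by_cases hr : r = y
    · simp [hr]
    calc G.avoidProb y (t+1+1) r z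
        = ∑ w, G.step r w * ∑ v, G.avoidProb y t w v * G.step v z := by
          simp only [G.avoidProb_succ_of_ne hr, ih]
      _ = ∑ v, (∑ w, G.step r w * G.avoidProb y t w v) * G.step v z := by
          simp only [Finset.mul_sum, Finset.sum_mul, mul_assoc]
          exact Finset.sum_comm
      _ = _ := by simp only [G.avoidProb_succ_of_ne hr]

lemma firstHitProb_succ_eq_sum (x : V) (t : ℕ) (r : V) :
    G.firstHitProb (t+1) r x = ∑ z, G.avoidProb x t r z * G.step z x := by
  by_cases hr : r = x
  · simp [hr, firstHitProb]
  induction t generalizing r with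
  | zero =>
    rw [sum_avoidProb_zero_mul, if_neg hr]
    simp [firstHitProb, hr]
  | succ t ih =>
    calc G.firstHitProb (t+1+1) r x
        = ∑ w, G.step r w * ∑ v, G.avoidProb x t w v * G.step v x := by
          rw [firstHitProb, if_neg hr]
          refine Finset.sum_congr rfl fun w _ => ?_
          by_cases hw : w = x
          · simp [hw, firstHitProb]
          · rw [ih w hw]
      _ = ∑ v, (∑ w, G.step r w * G.avoidProb x t w v) * G.step v x := by
          simp only [Finset.mul_sum, Finset.sum_mul, mul_assoc]
          exact Finset.sum_comm
      _ = _ := by simp only [G.avoidProb_succ_of_ne hr]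

/-- Probability that the walk started at `r` has not visited `x` at any time `≤ t`. -/
noncomputable def survivalProb (x : V) (t : ℕ) (r : V) : ℝ :=
  ∑ z, G.avoidProb x t r z

lemma survivalProb_nonneg (x : V) (t : ℕ) (r : V) : 0 ≤ G.survivalProb x t r :=
  Finset.sum_nonneg fun z _ => G.avoidProb_nonneg x t r z

lemma sum_avoidProb_succ_mul (x : V) (t : ℕ) (r : V) (g : V → ℝ) :
    ∑ z, G.avoidProb x (t+1) r z * g z
      = ∑ w, G.avoidProb x t r w * ∑ z, G.step w z * g z
        - G.firstHitProb (t+1) r x * g x := by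
  simp_rw [avoidProb_succ_eq_sum, ite_mul, zero_mul, Finset.sum_ite, Finset.sum_const_zero,
    zero_add, Finset.filter_ne', Finset.sum_erase_eq_sub (Finset.mem_univ x),
    firstHitProb_succ_eq_sum, Finset.sum_mul, Finset.mul_sum, mul_assoc]
  rw [Finset.sum_comm]

lemma survivalProb_succ (x : V) (hdeg : ∀ w, w ≠ x → 0 < G.degree w) (t : ℕ) (r : V) :
    G.survivalProb x (t+1) r = G.survivalProb x t r - G.firstHitProb (t+1) r x := by
  have h := G.sum_avoidProb_succ_mul x t r 1
  simp only [Pi.one_apply, mul_one] at h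
  rw [survivalProb, h, survivalProb]
  congr 1
  refine Finset.sum_congr rfl fun w _ => ?_
  by_cases hw : w = x
  · simp [hw]
  · rw [G.sum_step (hdeg w hw), mul_one]

section Potential

variable {x : V} {φ : V → ℝ} (hφx : φ x = 0)
  (hharm : ∀ w, w ≠ x → ∑ z, G.step w z * φ z = φ w - 1)
include hφx hharm

lemma sum_avoidProb_succ_mul_potential (t : ℕ) (r : V) :
    ∑ z, G.avoidProb x (t+1) r z * φ z
      = ∑ z, G.avoidProb x t r z * φ z - G.survivalProb x t r := by
  rw [sum_avoidProb_succ_mul, hφx, mul_zero, sub_zero, survivalProb, ← Finset.sum_sub_distrib]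
  refine Finset.sum_congr rfl fun w _ => ?_
  by_cases hw : w = x
  · simp [hw]
  · rw [hharm w hw]
    ring

lemma sum_survivalProb_add_potential (t : ℕ) (r : V) :
    ∑ s ∈ range t, G.survivalProb x s r + ∑ z, G.avoidProb x t r z * φ z = φ r := by
  induction t with
  | zero =>
    rw [Finset.sum_range_zero, zero_add, sum_avoidProb_zero_mul]
    split_ifs with hr
    · rw [hr, hφx]
    · rfl
  | succ t ih =>
    rw [Finset.sum_range_succ, G.sum_avoidProb_succ_mul_potential hφx hharm]
    linarith

end Potential

variable {x : V}

lemma sum_range_mul_firstHitProb (hdeg : ∀ w, w ≠ x → 0 < G.degree w) (r : V) (t : ℕ) :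
    ∑ s ∈ range (t+1), (s : ℝ) * G.firstHitProb s r x
      = ∑ s ∈ range t, G.survivalProb x s r - t * G.survivalProb x t r := by
  induction t with
  | zero => simp
  | succ t ih =>
    rw [Finset.sum_range_succ, ih, Finset.sum_range_succ, G.survivalProb_succ x hdeg]
    push_cast
    ring

/-- The tail-sum formula `E τ = ∑ₜ P(τ > t)` for the hitting time `τ` of `x`. -/
lemma hasSum_mul_firstHitProb (hdeg : ∀ w, w ≠ x → 0 < G.degree w) {r : V} {a : ℝ}
    (h : HasSum (fun t => G.survivalProb x t r) a) :
    HasSum (fun t : ℕ => (t : ℝ) * G.firstHitProb t r x) a := by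
  have hanti : Antitone fun t => G.survivalProb x t r := antitone_nat_of_succ_le fun t => by
    rw [G.survivalProb_succ x hdeg]
    linarith [G.firstHitProb_nonneg (t+1) r x]
  have htail := hanti.tendsto_nat_mul_of_summable h.summable
  rw [hasSum_iff_tendsto_nat_of_nonneg
    (fun t => mul_nonneg t.cast_nonneg (G.firstHitProb_nonneg t r x)),
    ← tendsto_add_atTop_iff_nat 1]
  simp_rw [G.sum_range_mul_firstHitProb hdeg]
  simpa using h.tendsto_sum_nat.sub htail

lemma hasSum_survivalProb_of_potential {φ : V → ℝ} (hφx : φ x = 0) (hφ : ∀ z, 0 ≤ φ z)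
    (hharm : ∀ w, w ≠ x → ∑ z, G.step w z * φ z = φ w - 1) (r : V) :
    HasSum (fun t => G.survivalProb x t r) (φ r) := by
  have hΦ : ∀ t, 0 ≤ ∑ z, G.avoidProb x t r z * φ z := fun t =>
    Finset.sum_nonneg fun z _ => mul_nonneg (G.avoidProb_nonneg x t r z) (hφ z)
  have hsum := (G.sum_survivalProb_add_potential hφx hharm · r)
  have hS : Summable fun t => G.survivalProb x t r :=
    summable_of_sum_range_le (c := φ r) (G.survivalProb_nonneg x · r) fun t => by
      linarith [hsum t, hΦ t]
  have hΦle : ∀ t, ∑ z, G.avoidProb x t r z * φ z ≤ (∑ z, φ z) * G.survivalProb x t r := by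
    intro t
    rw [survivalProb, Finset.mul_sum]
    refine Finset.sum_le_sum fun z _ => ?_
    rw [mul_comm (∑ z, φ z)]
    exact mul_le_mul_of_nonneg_left (Finset.single_le_sum (fun z _ => hφ z) (Finset.mem_univ z))
      (G.avoidProb_nonneg x t r z)
  have hΦ0 := squeeze_zero hΦ hΦle (by simpa using hS.tendsto_atTop_zero.const_mul (∑ z, φ z))
  rw [hasSum_iff_tendsto_nat_of_nonneg (G.survivalProb_nonneg x · r)]
  have : ∀ t, ∑ s ∈ range t, G.survivalProb x s r = φ r - ∑ z, G.avoidProb x t r z * φ z :=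
    fun t => by linarith [hsum t]
  simpa [this] using (tendsto_const_nhds (x := φ r)).sub hΦ0

theorem hitTime_eq_of_potential (hdeg : ∀ w, w ≠ x → 0 < G.degree w) {φ : V → ℝ}
    (hφx : φ x = 0) (hφ : ∀ z, 0 ≤ φ z)
    (hharm : ∀ w, w ≠ x → ∑ z, G.step w z * φ z = φ w - 1) (r : V) :
    G.hitTime r x = φ r :=
  (G.hasSum_mul_firstHitProb hdeg (G.hasSum_survivalProb_of_potential hφx hφ hharm r)).tsum_eq

end SimpleGraph

@[simp]
lemma pathG_adj {n : ℕ} {i j : Fin (n+1)} :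
    (pathG n).Adj i j ↔ (i : ℕ) + 1 = j ∨ (j : ℕ) + 1 = i := Iff.rfl

lemma pathG_neighborFinset_of_val_eq_zero {n : ℕ} (hn : 1 ≤ n) {w : Fin (n+1)}
    (hw : (w : ℕ) = 0) : (pathG n).neighborFinset w = {⟨1, by omega⟩} := by
  ext j
  simp only [SimpleGraph.mem_neighborFinset, pathG_adj, Finset.mem_singleton, Fin.ext_iff]
  omega

lemma pathG_neighborFinset_of_val_eq_last {n : ℕ} (hn : 1 ≤ n) {w : Fin (n+1)}
    (hw : (w : ℕ) = n) : (pathG n).neighborFinset w = {⟨n - 1, by omega⟩} := by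
  ext j
  simp only [SimpleGraph.mem_neighborFinset, pathG_adj, Finset.mem_singleton, Fin.ext_iff]
  omega

lemma pathG_neighborFinset_of_pos_of_lt {n : ℕ} {w : Fin (n+1)} (h0 : 0 < (w : ℕ))
    (hn : (w : ℕ) < n) :
    (pathG n).neighborFinset w = {⟨(w : ℕ) - 1, by omega⟩, ⟨(w : ℕ) + 1, by omega⟩} := by
  ext j
  simp only [SimpleGraph.mem_neighborFinset, pathG_adj, Finset.mem_insert,
    Finset.mem_singleton, Fin.ext_iff]
  omega

lemma pathG_degree_pos_of_ne {n : ℕ} {w x : Fin (n+1)} (hwx : w ≠ x) :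
    0 < (pathG n).degree w := by
  rw [SimpleGraph.degree_pos_iff_exists_adj]
  have hwx' : (w : ℕ) ≠ x := Fin.val_ne_of_ne hwx
  rcases Nat.lt_or_gt_of_ne hwx' with h | h
  · exact ⟨⟨w + 1, by omega⟩, Or.inl rfl⟩
  · exact ⟨⟨w - 1, by omega⟩, Or.inr (by simp only; omega)⟩

/-- The hitting time `H_z(x)` on the path `P_n`: it is `x² - z²` for `z ≤ x` and
`(n - x)² - (n - z)²` for `z ≥ x` (the truncated subtraction `z - x` in `ℕ` is `(z - x)⁺`). -/
noncomputable def pathHit (n : ℕ) (x z : Fin (n+1)) : ℝ :=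
  ((x : ℕ) : ℝ) ^ 2 - ((z : ℕ) : ℝ) ^ 2 + 2 * n * (((z : ℕ) - x : ℕ) : ℝ)

lemma pathHit_of_le {n : ℕ} {x z : Fin (n+1)} (h : (z : ℕ) ≤ x) :
    pathHit n x z = ((x : ℕ) : ℝ) ^ 2 - ((z : ℕ) : ℝ) ^ 2 := by
  simp [pathHit, Nat.sub_eq_zero_of_le h]

lemma pathHit_of_ge {n : ℕ} {x z : Fin (n+1)} (h : (x : ℕ) ≤ z) :
    pathHit n x z = ((x : ℕ) : ℝ) ^ 2 - ((z : ℕ) : ℝ) ^ 2 + 2 * n * ((z : ℕ) - (x : ℕ)) := by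
  simp [pathHit, Nat.cast_sub h]

lemma pathHit_self {n : ℕ} (x : Fin (n+1)) : pathHit n x x = 0 := by
  simp [pathHit]

lemma pathHit_nonneg {n : ℕ} (x z : Fin (n+1)) : 0 ≤ pathHit n x z := by
  have hx : ((x : ℕ) : ℝ) ≤ n := by exact_mod_cast Nat.lt_succ_iff.mp x.isLt
  have hz : ((z : ℕ) : ℝ) ≤ n := by exact_mod_cast Nat.lt_succ_iff.mp z.isLt
  rcases le_total (z : ℕ) x with h | h
  · have h' : ((z : ℕ) : ℝ) ≤ x := by exact_mod_cast h
    rw [pathHit_of_le h]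
    nlinarith [(z : ℕ).cast_nonneg (α := ℝ)]
  · have h' : ((x : ℕ) : ℝ) ≤ z := by exact_mod_cast h
    rw [pathHit_of_ge h]
    nlinarith

lemma sum_step_mul_pathHit {n : ℕ} (x w : Fin (n+1)) (hwx : w ≠ x) :
    ∑ z, (pathG n).step w z * pathHit n x z = pathHit n x w - 1 := by
  have hwx' : (w : ℕ) ≠ x := Fin.val_ne_of_ne hwx
  have hw := w.isLt
  have hx := x.isLt
  rw [SimpleGraph.sum_step_mul, ← SimpleGraph.card_neighborFinset_eq_degree]
  rcases Nat.eq_zero_or_pos (w : ℕ) with h0 | h0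
  · rw [pathG_neighborFinset_of_val_eq_zero (by omega) h0, Finset.sum_singleton,
      Finset.card_singleton, pathHit_of_le (by simp only; omega), pathHit_of_le (by omega), h0]
    push_cast
    ring
  rcases eq_or_lt_of_le (Nat.lt_succ_iff.mp hw) with hn | hn
  · rw [pathG_neighborFinset_of_val_eq_last (by omega) hn, Finset.sum_singleton,
      Finset.card_singleton, pathHit_of_ge (by simp only; omega), pathHit_of_ge (by omega), hn]
    push_cast [Nat.cast_sub (by omega : 1 ≤ n)]
    ring
  rw [pathG_neighborFinset_of_pos_of_lt h0 hn, Finset.sum_pair (by simp [Fin.ext_iff]),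
    Finset.card_pair (by simp [Fin.ext_iff])]
  rcases Nat.lt_or_gt_of_ne hwx' with h | h
  · rw [pathHit_of_le (by simp only; omega), pathHit_of_le (by simp only; omega),
      pathHit_of_le h.le]
    push_cast [Nat.cast_sub (by omega : 1 ≤ (w : ℕ))]
    ring
  · rw [pathHit_of_ge (by simp only; omega), pathHit_of_ge (by simp only; omega),
      pathHit_of_ge h.le]
    push_cast [Nat.cast_sub (by omega : 1 ≤ (w : ℕ))]
    ring

lemma pathG_hitTime {n : ℕ} (r x : Fin (n+1)) : (pathG n).hitTime r x = pathHit n x r :=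
  (pathG n).hitTime_eq_of_potential (fun _ => pathG_degree_pos_of_ne) (pathHit_self x)
    (pathHit_nonneg x) (sum_step_mul_pathHit x) r

lemma sum_range_cast_sub {r N : ℕ} (h : r ≤ N) :
    ∑ k ∈ range N, ((r - k : ℕ) : ℝ) = r * (r + 1) / 2 := by
  have htail : ∑ k ∈ Ico r N, ((r - k : ℕ) : ℝ) = 0 :=
    Finset.sum_eq_zero fun k hk => by simp [Nat.sub_eq_zero_of_le (Finset.mem_Ico.mp hk).1]
  rw [← Finset.sum_range_add_sum_Ico _ h, htail, add_zero, ← Finset.sum_range_reflect]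
  calc ∑ j ∈ range r, ((r - (r - 1 - j) : ℕ) : ℝ) = ∑ j ∈ range r, ((j : ℝ) + 1) :=
        Finset.sum_congr rfl fun j hj => by
          rw [Finset.mem_range] at hj
          rw [show r - (r - 1 - j) = j + 1 by omega, Nat.cast_add_one]
    _ = r * (r + 1) / 2 :=
        Finset.sum_range_induction _ (fun m : ℕ => (m : ℝ) * (m + 1) / 2) (by simp) r
          fun k _ => by push_cast; ring

lemma sum_range_cast_sq (N : ℕ) :
    ∑ k ∈ range N, ((k : ℝ)) ^ 2 = N * (N - 1) * (2 * N - 1) / 6 :=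
  Finset.sum_range_induction _ (fun m : ℕ => (m : ℝ) * (m - 1) * (2 * m - 1) / 6) (by simp) N
    fun k _ => by push_cast; ring

lemma sum_pathHit (n : ℕ) (r : Fin (n+1)) :
    ∑ k, pathHit n k r = (n : ℝ) * (n + 1) * (2 * n + 1) / 6 + (r : ℕ) * (n - (r : ℕ)) := by
  have hrange : ∑ k, pathHit n k r
      = ∑ k ∈ range (n+1), ((k : ℝ) ^ 2 - ((r : ℕ) : ℝ) ^ 2 + 2 * n * ((r - k : ℕ) : ℝ)) :=
    Fin.sum_univ_eq_sum_range (fun k => (k : ℝ) ^ 2 - ((r : ℕ) : ℝ) ^ 2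
      + 2 * n * ((r - k : ℕ) : ℝ)) (n+1)
  rw [hrange, Finset.sum_add_distrib, Finset.sum_sub_distrib, ← Finset.mul_sum, sum_range_cast_sq,
    sum_range_cast_sub r.isLt.le, Finset.sum_const, Finset.card_range, nsmul_eq_mul]
  push_cast
  ring

/-- The sum of hitting times on the path: `∑ₖ H_r(k) = n(n+1)(2n+1)/6 + r(n-r)`. -/
theorem path_sum_hitTime (n : ℕ) (r : Fin (n+1)) :
    ∑ k : Fin (n+1), (pathG n).hitTime r k =
      (n : ℝ) * ((n : ℝ) + 1) * (2 * (n : ℝ) + 1) / 6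
        + ((r : ℕ) : ℝ) * ((n : ℝ) - ((r : ℕ) : ℝ)) := by
  simp_rw [pathG_hitTime]
  exact sum_pathHit n r
end

section
/- For every finite connected graph G on n+1 vertices and every starting vertex r, the cover cost cc_r(G), the cover time CT_r(G), and the Cover Cost CC_r(G) = n\,cc_r(G) satisfy cc_r(G) < CT_r(G) < CC_r(G), provided n \ge 2. -/
open Finset

variable {V : Type*} [Fintype V] [DecidableEq V]

/-! The cover time and the cover cost are the sums over `t` of `P(not covered at time t)` and of
`E[1 - k_t/n; not covered at time t]`. While the walk has not covered the graph, at most `n - 1`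
vertices other than `r` have been visited, so the weight `1 - k_t/n` lies in `[1/n, 1]`; this
gives the two inequalities term by term. They are strict at `t = 1` (after the first step the weight
is `1 - 1/n`) and at `t = 0` (both terms equal `1`, and `n ≥ 2`). Convergence of the series holds
because from every state a walk covering the graph within `T` steps has probability at least
`|V|⁻ᵀ`, so the probability of not being covered decays geometrically. -/

theorem summable_of_antitone_of_le_pow {u : ℕ → ℝ} (hu₀ : ∀ t, 0 ≤ u t) (hu : Antitone u)
    {T : ℕ} [NeZero T] {ρ : ℝ} (hρ : ρ < 1) (hdecay : ∀ k, u (k * T) ≤ ρ ^ k) :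
    Summable u := by
  have hρ₀ : 0 ≤ ρ := by simpa using (hu₀ T).trans (by simpa using hdecay 1)
  rw [← (Nat.divModEquiv T).symm.summable_iff]
  refine .of_nonneg_of_le (fun _ => hu₀ _) (fun p => ?_)
    ((summable_geometric_of_lt_one hρ₀ hρ).mul_of_nonneg (.of_finite (f := fun _ : Fin T => 1))
      (fun _ => pow_nonneg hρ₀ _) fun _ => zero_le_one)
  simpa using (hu (Nat.le_add_right _ _)).trans (hdecay p.1)

namespace SimpleGraph

omit [DecidableEq V] in
theorem Connected.exists_walk_forall_mem_support {G : SimpleGraph V} (hG : G.Connected)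
    (a : V) : ∃ (b : V) (w : G.Walk a b), ∀ u, u ∈ w.support := by
  suffices ∀ (l : List V) (a : V), ∃ (b : V) (w : G.Walk a b), ∀ u ∈ l, u ∈ w.support by
    simpa using this Finset.univ.toList a
  intro l
  induction l with
  | nil => exact fun a => ⟨a, .nil, by simp⟩
  | cons u l ih =>
    intro a
    obtain ⟨w₁⟩ := hG.preconnected a u
    obtain ⟨b, w₂, hw₂⟩ := ih u
    refine ⟨b, w₁.append w₂, fun x hx => ?_⟩
    rw [Walk.mem_support_append_iff]
    rcases List.mem_cons.mp hx with rfl | hx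
    · exact .inl w₁.end_mem_support
    · exact .inr (hw₂ x hx)

variable (G : SimpleGraph V) [DecidableRel G.Adj]

omit [DecidableEq V] in
theorem step_nonneg_s8 (x y : V) : 0 ≤ G.step x y := by
  unfold step; split_ifs <;> positivity

omit [DecidableEq V] in
theorem inv_card_le_step {x y : V} (h : G.Adj x y) : (Fintype.card V : ℝ)⁻¹ ≤ G.step x y := by
  rw [step, if_pos h]
  exact inv_anti₀ (by exact_mod_cast h.degree_pos_left)
    (by exact_mod_cast (G.degree_lt_card_verts x).le)

omit [DecidableEq V] in
theorem sum_step_s8 {x : V} (hx : 0 < G.degree x) : ∑ y, G.step x y = 1 := by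
  simp only [step, Finset.sum_ite, Finset.sum_const_zero, add_zero, Finset.sum_const,
    nsmul_eq_mul]
  rw [← neighborFinset_eq_filter, card_neighborFinset_eq_degree]
  exact mul_inv_cancel₀ (by positivity)

/-- Transition kernel of the walk on states (position, set of visited vertices). -/
noncomputable def coverKernel (q p : V × Finset V) : ℝ :=
  if p.2 = insert p.1 q.2 then G.step q.1 p.1 else 0

noncomputable def coverChain (q₀ : V × Finset V) : ℕ → V × Finset V → ℝ
  | 0, p => if p = q₀ then 1 else 0
  | t + 1, p => ∑ q, G.coverKernel q p * coverChain q₀ t q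

theorem coverKernel_nonneg (q p : V × Finset V) : 0 ≤ G.coverKernel q p := by
  unfold coverKernel; split_ifs
  exacts [G.step_nonneg_s8 _ _, le_rfl]

theorem sum_coverKernel (q : V × Finset V) : ∑ p, G.coverKernel q p = ∑ v, G.step q.1 v := by
  simp [coverKernel, Fintype.sum_prod_type]

theorem coverDist_eq_coverChain (r : V) : G.coverDist r = G.coverChain (r, {r}) := by
  funext t
  induction t with
  | zero => rfl
  | succ t ih => funext p; simp only [coverDist, coverChain, coverKernel, ih]

theorem coverChain_nonneg (q₀ : V × Finset V) (t : ℕ) (p : V × Finset V) :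
    0 ≤ G.coverChain q₀ t p := by
  induction t generalizing p with
  | zero => unfold coverChain; split_ifs <;> norm_num
  | succ t ih =>
    exact Finset.sum_nonneg fun q _ => mul_nonneg (G.coverKernel_nonneg q p) (ih q)

theorem sum_coverChain (hG : 0 < G.minDegree) (q₀ : V × Finset V) (t : ℕ) :
    ∑ p, G.coverChain q₀ t p = 1 := by
  induction t with
  | zero => simp [coverChain]
  | succ t ih =>
    simp only [coverChain]
    rw [Finset.sum_comm, ← ih]
    refine Finset.sum_congr rfl fun q _ => ?_
    rw [← Finset.sum_mul, sum_coverKernel,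
      G.sum_step_s8 (hG.trans_le (G.minDegree_le_degree q.1)), one_mul]

theorem eq_of_coverChain_zero_ne_zero {q₀ p : V × Finset V} (h : G.coverChain q₀ 0 p ≠ 0) :
    p = q₀ := by
  by_contra hp
  simp [coverChain, hp] at h

theorem insert_eq_of_coverChain_succ_ne_zero {q₀ p : V × Finset V} {t : ℕ}
    (h : G.coverChain q₀ (t + 1) p ≠ 0) :
    ∃ q, p.2 = insert p.1 q.2 ∧ G.coverChain q₀ t q ≠ 0 := by
  obtain ⟨q, -, hq⟩ := Finset.exists_ne_zero_of_sum_ne_zero h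
  refine ⟨q, ?_, right_ne_zero_of_mul hq⟩
  by_contra hne
  exact hq (by simp [coverKernel, hne])

theorem subset_of_coverChain_ne_zero {q₀ p : V × Finset V} {t : ℕ}
    (h : G.coverChain q₀ t p ≠ 0) : q₀.2 ⊆ p.2 := by
  induction t generalizing p with
  | zero => rw [G.eq_of_coverChain_zero_ne_zero h]
  | succ t ih =>
    obtain ⟨q, hp, hq⟩ := G.insert_eq_of_coverChain_succ_ne_zero h
    exact (ih hq).trans (hp ▸ Finset.subset_insert _ _)

theorem fst_mem_of_coverChain_ne_zero {q₀ p : V × Finset V} {t : ℕ} (hq₀ : q₀.1 ∈ q₀.2)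
    (h : G.coverChain q₀ t p ≠ 0) : p.1 ∈ p.2 := by
  cases t with
  | zero => rwa [G.eq_of_coverChain_zero_ne_zero h]
  | succ t =>
    obtain ⟨q, hp, -⟩ := G.insert_eq_of_coverChain_succ_ne_zero h
    exact hp ▸ Finset.mem_insert_self _ _

theorem coverChain_add (q₀ : V × Finset V) (s t : ℕ) (p : V × Finset V) :
    G.coverChain q₀ (s + t) p = ∑ q, G.coverChain q₀ s q * G.coverChain q t p := by
  induction t generalizing p with
  | zero => simp [coverChain]
  | succ t ih =>
    rw [← add_assoc]
    simp only [coverChain, ih, Finset.mul_sum]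
    rw [Finset.sum_comm]
    exact Finset.sum_congr rfl fun _ _ => Finset.sum_congr rfl fun _ _ => by ring

theorem coverChain_one (q p : V × Finset V) : G.coverChain q 1 p = G.coverKernel q p := by
  simp [coverChain]

theorem coverChain_succ' (q₀ : V × Finset V) (t : ℕ) (p : V × Finset V) :
    G.coverChain q₀ (t + 1) p = ∑ q, G.coverKernel q₀ q * G.coverChain q t p := by
  simp only [add_comm t, coverChain_add, coverChain_one]

theorem inv_card_pow_le_coverChain {a b : V} (w : G.Walk a b) {S : Finset V} (ha : a ∈ S) :
    (Fintype.card V : ℝ)⁻¹ ^ w.length ≤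
      G.coverChain (a, S) w.length (b, S ∪ w.support.toFinset) := by
  induction w generalizing S with
  | nil => simp [coverChain, ha]
  | @cons a c b hac w ih =>
    have hS : insert c S ∪ w.support.toFinset = S ∪ (Walk.cons hac w).support.toFinset := by
      ext x
      simp only [Finset.mem_union, Finset.mem_insert, List.mem_toFinset, Walk.support_cons,
        List.mem_cons]
      have := w.start_mem_support
      grind
    rw [Walk.length_cons, coverChain_succ', pow_succ', ← hS]
    calc _ ≤ G.coverKernel (a, S) (c, insert c S) *
          G.coverChain (c, insert c S) w.length (b, insert c S ∪ w.support.toFinset) := by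
          refine mul_le_mul ?_ (ih (Finset.mem_insert_self c S)) (by positivity)
            (G.coverKernel_nonneg _ _)
          simpa [coverKernel] using G.inv_card_le_step hac
      _ ≤ _ := Finset.single_le_sum (f := fun q => G.coverKernel (a, S) q *
          G.coverChain q w.length (b, insert c S ∪ w.support.toFinset))
          (fun q _ => mul_nonneg (G.coverKernel_nonneg _ q) (G.coverChain_nonneg _ _ _))
          (Finset.mem_univ (c, insert c S))

noncomputable def uncoveredProb (q₀ : V × Finset V) (t : ℕ) : ℝ :=
  ∑ p, if p.2 ≠ Finset.univ then G.coverChain q₀ t p else 0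

theorem uncoveredProb_nonneg (q₀ : V × Finset V) (t : ℕ) : 0 ≤ G.uncoveredProb q₀ t :=
  Finset.sum_nonneg fun p _ => by split_ifs <;> simp [G.coverChain_nonneg]

theorem uncoveredProb_le_one_sub {q₀ p : V × Finset V} {t : ℕ} (hG : 0 < G.minDegree)
    (hp : p.2 = Finset.univ) : G.uncoveredProb q₀ t ≤ 1 - G.coverChain q₀ t p := by
  have hp' : G.coverChain q₀ t p ≤
      ∑ q : V × Finset V, if q.2 ≠ Finset.univ then 0 else G.coverChain q₀ t q :=
    (Finset.single_le_sum (f := fun q : V × Finset V =>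
      if q.2 ≠ Finset.univ then 0 else G.coverChain q₀ t q)
      (fun q _ => by split_ifs <;> simp [G.coverChain_nonneg]) (Finset.mem_univ p)).trans_eq'
      (by simp [hp])
  have hsplit : G.uncoveredProb q₀ t +
      ∑ q : V × Finset V, (if q.2 ≠ Finset.univ then 0 else G.coverChain q₀ t q) = 1 := by
    rw [← G.sum_coverChain hG q₀ t, uncoveredProb, ← Finset.sum_add_distrib]
    exact Finset.sum_congr rfl fun q _ => by split_ifs <;> simp
  linarith

theorem uncoveredProb_le_one (hG : 0 < G.minDegree) (q₀ : V × Finset V) (t : ℕ) :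
    G.uncoveredProb q₀ t ≤ 1 := by
  rw [← G.sum_coverChain hG q₀ t]
  exact Finset.sum_le_sum fun p _ => by split_ifs <;> simp [G.coverChain_nonneg]

theorem uncoveredProb_eq_zero {q : V × Finset V} (hq : q.2 = Finset.univ) (t : ℕ) :
    G.uncoveredProb q t = 0 := by
  refine Finset.sum_eq_zero fun p _ => ?_
  split_ifs with hp
  · by_contra h
    exact hp (Finset.eq_univ_of_forall fun x =>
      G.subset_of_coverChain_ne_zero h (hq ▸ Finset.mem_univ x))
  · rfl

theorem uncoveredProb_add (q₀ : V × Finset V) (s t : ℕ) :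
    G.uncoveredProb q₀ (s + t) = ∑ q, G.coverChain q₀ s q * G.uncoveredProb q t := by
  simp only [uncoveredProb, coverChain_add, Finset.mul_sum, mul_ite, mul_zero]
  rw [Finset.sum_comm]
  exact Finset.sum_congr rfl fun p _ => by split_ifs <;> simp

theorem uncoveredProb_add_le_mul {q₀ : V × Finset V} (hq₀ : q₀.1 ∈ q₀.2) {t : ℕ} {c : ℝ}
    (hc : ∀ q : V × Finset V, q.1 ∈ q.2 → q.2 ≠ Finset.univ → G.uncoveredProb q t ≤ c)
    (s : ℕ) :
    G.uncoveredProb q₀ (s + t) ≤ c * G.uncoveredProb q₀ s := by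
  rw [uncoveredProb_add, uncoveredProb, Finset.mul_sum]
  refine Finset.sum_le_sum fun q _ => ?_
  by_cases hq : q.2 = Finset.univ
  · simp [hq, G.uncoveredProb_eq_zero hq]
  by_cases hz : G.coverChain q₀ s q = 0
  · simp [hz]
  rw [if_pos hq, mul_comm c]
  exact mul_le_mul_of_nonneg_left
    (hc q (G.fst_mem_of_coverChain_ne_zero hq₀ hz) hq) (G.coverChain_nonneg _ _ _)

theorem uncoveredProb_antitone (hG : 0 < G.minDegree) {q₀ : V × Finset V}
    (hq₀ : q₀.1 ∈ q₀.2) : Antitone (G.uncoveredProb q₀) :=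
  antitone_nat_of_succ_le fun s => by
    simpa using G.uncoveredProb_add_le_mul hq₀ (fun q _ _ => G.uncoveredProb_le_one hG q 1) s

theorem uncoveredProb_le_one_sub_inv_card_pow (hG : 0 < G.minDegree) {a b : V} {S : Finset V}
    (ha : a ∈ S) (w : G.Walk a b) (hw : ∀ u, u ∈ w.support) {T : ℕ} (hT : w.length ≤ T) :
    G.uncoveredProb (a, S) T ≤ 1 - (Fintype.card V : ℝ)⁻¹ ^ T := by
  have hcov : S ∪ w.support.toFinset = Finset.univ :=
    Finset.eq_univ_of_forall fun x => Finset.mem_union_right _ (List.mem_toFinset.mpr (hw x))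
  have hcard : (1 : ℝ) ≤ Fintype.card V := by exact_mod_cast Fintype.card_pos_iff.mpr ⟨a⟩
  calc G.uncoveredProb (a, S) T ≤ G.uncoveredProb (a, S) w.length :=
        G.uncoveredProb_antitone hG ha hT
    _ ≤ 1 - G.coverChain (a, S) w.length (b, S ∪ w.support.toFinset) :=
        G.uncoveredProb_le_one_sub hG hcov
    _ ≤ 1 - (Fintype.card V : ℝ)⁻¹ ^ w.length := by
        linarith [G.inv_card_pow_le_coverChain w ha]
    _ ≤ 1 - (Fintype.card V : ℝ)⁻¹ ^ T := by
        linarith [pow_le_pow_of_le_one (by positivity) (inv_le_one_of_one_le₀ hcard) hT]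

theorem summable_uncoveredProb (hG : G.Connected) [Nontrivial V] {q₀ : V × Finset V}
    (hq₀ : q₀.1 ∈ q₀.2) : Summable (G.uncoveredProb q₀) := by
  have hdeg := hG.preconnected.minDegree_pos_of_nontrivial
  choose b w hw using hG.exists_walk_forall_mem_support
  obtain ⟨T, hT⟩ := Finite.exists_le fun a => (w a).length + 1
  have : NeZero T := ⟨by have := hT q₀.1; omega⟩
  have hcard : (1 : ℝ) ≤ Fintype.card V := by exact_mod_cast Fintype.card_pos
  have hε : 0 < (Fintype.card V : ℝ)⁻¹ ^ T := by positivity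
  have hε₁ : (Fintype.card V : ℝ)⁻¹ ^ T ≤ 1 :=
    pow_le_one₀ (by positivity) (inv_le_one_of_one_le₀ hcard)
  refine summable_of_antitone_of_le_pow (T := T) (G.uncoveredProb_nonneg q₀)
    (G.uncoveredProb_antitone hdeg hq₀) (sub_lt_self 1 hε) fun k => ?_
  induction k with
  | zero => simpa using G.uncoveredProb_le_one hdeg q₀ 0
  | succ k ih =>
    rw [add_mul, one_mul, pow_succ']
    refine (G.uncoveredProb_add_le_mul hq₀ (fun q hq _ => ?_) _).trans
      (mul_le_mul_of_nonneg_left ih (sub_nonneg.mpr hε₁))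
    exact G.uncoveredProb_le_one_sub_inv_card_pow hdeg hq (w q.1) (hw q.1)
      (by have := hT q.1; omega)

noncomputable def coverWeight (r : V) (S : Finset V) : ℝ :=
  1 - ((S.erase r).card : ℝ) / ((Fintype.card V : ℝ) - 1)

theorem coverWeight_le_one (r : V) (S : Finset V) : coverWeight r S ≤ 1 := by
  have hcard : (1 : ℝ) ≤ Fintype.card V := by exact_mod_cast Fintype.card_pos_iff.mpr ⟨r⟩
  have : 0 ≤ ((S.erase r).card : ℝ) / ((Fintype.card V : ℝ) - 1) :=
    div_nonneg (Nat.cast_nonneg _) (sub_nonneg.mpr hcard)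
  rw [coverWeight]
  linarith

theorem coverWeight_nonneg {r : V} {S : Finset V} (hr : r ∈ S) : 0 ≤ coverWeight r S := by
  have hk : (S.erase r).card + 1 ≤ Fintype.card V := by
    rw [Finset.card_erase_add_one hr]; exact Finset.card_le_univ S
  have hk' : ((S.erase r).card : ℝ) + 1 ≤ Fintype.card V := by exact_mod_cast hk
  rw [coverWeight, sub_nonneg]
  exact div_le_one_of_le₀ (by linarith) (by linarith [(S.erase r).card.cast_nonneg (α := ℝ)])

theorem one_le_mul_coverWeight {r : V} {S : Finset V} (hr : r ∈ S) (hS : S ≠ Finset.univ) :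
    1 ≤ ((Fintype.card V : ℝ) - 1) * coverWeight r S := by
  have hk : (S.erase r).card + 2 ≤ Fintype.card V := by
    have hlt := (Finset.card_lt_card (Finset.ssubset_univ_iff.mpr hS)).trans_eq Finset.card_univ
    rw [← Finset.card_erase_add_one hr] at hlt
    omega
  have hk' : ((S.erase r).card : ℝ) + 2 ≤ Fintype.card V := by exact_mod_cast hk
  rw [coverWeight, mul_sub, mul_one, mul_div_cancel₀ _ (by linarith)]
  linarith

noncomputable def uncoveredCost (r : V) (t : ℕ) : ℝ :=
  ∑ p, if p.2 ≠ Finset.univ then G.coverChain (r, {r}) t p * coverWeight r p.2 else 0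

theorem coverTime_eq_tsum_uncoveredProb (r : V) :
    G.coverTime r = ∑' t, G.uncoveredProb (r, {r}) t := by
  rw [coverTime, coverDist_eq_coverChain]; rfl

theorem coverCost_eq_tsum_uncoveredCost (r : V) :
    G.coverCost r = ∑' t, G.uncoveredCost r t := by
  rw [coverCost, coverDist_eq_coverChain]; rfl

theorem mem_of_coverChain_ne_zero {r : V} {p : V × Finset V} {t : ℕ}
    (h : G.coverChain (r, {r}) t p ≠ 0) : r ∈ p.2 :=
  G.subset_of_coverChain_ne_zero h (Finset.mem_singleton_self r)

theorem uncoveredCost_nonneg (r : V) (t : ℕ) : 0 ≤ G.uncoveredCost r t := by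
  refine Finset.sum_nonneg fun p _ => ?_
  split_ifs
  · by_cases hz : G.coverChain (r, {r}) t p = 0
    · simp [hz]
    · exact mul_nonneg (G.coverChain_nonneg _ _ _)
        (coverWeight_nonneg (G.mem_of_coverChain_ne_zero hz))
  · rfl

theorem uncoveredCost_le_uncoveredProb (r : V) (t : ℕ) :
    G.uncoveredCost r t ≤ G.uncoveredProb (r, {r}) t :=
  Finset.sum_le_sum fun p _ => by
    split_ifs
    exacts [mul_le_of_le_one_right (G.coverChain_nonneg _ _ _) (coverWeight_le_one r p.2), le_rfl]

theorem uncoveredProb_le_mul_uncoveredCost (r : V) (t : ℕ) :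
    G.uncoveredProb (r, {r}) t ≤ ((Fintype.card V : ℝ) - 1) * G.uncoveredCost r t := by
  rw [uncoveredCost, Finset.mul_sum]
  refine Finset.sum_le_sum fun p _ => ?_
  split_ifs with hp
  · by_cases hz : G.coverChain (r, {r}) t p = 0
    · simp [hz]
    calc G.coverChain (r, {r}) t p
        ≤ G.coverChain (r, {r}) t p * (((Fintype.card V : ℝ) - 1) * coverWeight r p.2) :=
          le_mul_of_one_le_right (G.coverChain_nonneg _ _ _)
            (one_le_mul_coverWeight (G.mem_of_coverChain_ne_zero hz) hp)
      _ = _ := by ring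
  · simp

theorem uncoveredProb_zero {q₀ : V × Finset V} (h : q₀.2 ≠ Finset.univ) :
    G.uncoveredProb q₀ 0 = 1 := by
  rw [uncoveredProb, Fintype.sum_eq_single q₀ fun p hp => by simp [coverChain, hp]]
  simp [coverChain, h]

theorem uncoveredCost_zero {r : V} (h : {r} ≠ Finset.univ) : G.uncoveredCost r 0 = 1 := by
  rw [uncoveredCost, Fintype.sum_eq_single (r, {r}) fun p hp => by simp [coverChain, hp]]
  simp [coverChain, coverWeight, h]

theorem uncoveredCost_one_lt_uncoveredProb_one {r : V} (hr : 0 < G.degree r)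
    (hV : 2 < Fintype.card V) : G.uncoveredCost r 1 < G.uncoveredProb (r, {r}) 1 := by
  obtain ⟨v, hv⟩ := (G.degree_pos_iff_exists_adj r).mp hr
  have hp : ({v, r} : Finset V) ≠ Finset.univ := by
    intro h
    have := (Finset.card_le_two (a := v) (b := r)).trans_eq' (by rw [h, Finset.card_univ])
    omega
  refine Finset.sum_lt_sum (fun p _ => ?_) ⟨(v, {v, r}), Finset.mem_univ _, ?_⟩
  · split_ifs
    exacts [mul_le_of_le_one_right (G.coverChain_nonneg _ _ _) (coverWeight_le_one r p.2), le_rfl]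
  have hstep : 0 < G.step r v :=
    (inv_pos.mpr (Nat.cast_pos.mpr (by omega))).trans_le (G.inv_card_le_step hv)
  have hw : coverWeight r {v, r} < 1 := by
    simp [coverWeight, Finset.erase_insert_of_ne hv.ne.symm]
    omega
  simpa [hp, coverChain_one, coverKernel] using mul_lt_of_lt_one_right hstep hw

end SimpleGraph

/-- For every finite connected graph `G` on `n+1` vertices (`n ≥ 2`) and starting vertex `r`,
`cc_r(G) < CT_r(G) < CC_r(G)`, where `CC_r(G) = n · cc_r(G)`. -/
theorem coverCost_lt_coverTime_lt_CoverCost {V : Type*} [Fintype V] [DecidableEq V]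
    (G : SimpleGraph V) [DecidableRel G.Adj] (hG : G.Connected)
    (n : ℕ) (hcard : Fintype.card V = n + 1) (hn : 2 ≤ n) (r : V) :
    G.coverCost r < G.coverTime r ∧ G.coverTime r < (n : ℝ) * G.coverCost r := by
  have : Nontrivial V := Fintype.one_lt_card_iff_nontrivial.mp (by omega)
  have hsingle := Finset.singleton_ne_univ r
  have hn' : (Fintype.card V : ℝ) - 1 = n := by rw [hcard]; push_cast; ring
  have hsum := G.summable_uncoveredProb hG (q₀ := (r, {r})) (Finset.mem_singleton_self r)
  have hcost_le := G.uncoveredCost_le_uncoveredProb r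
  have hsumc : Summable (G.uncoveredCost r) :=
    .of_nonneg_of_le (G.uncoveredCost_nonneg r) hcost_le hsum
  rw [G.coverTime_eq_tsum_uncoveredProb, G.coverCost_eq_tsum_uncoveredCost, ← tsum_mul_left]
  refine ⟨hsumc.tsum_lt_tsum hcost_le (G.uncoveredCost_one_lt_uncoveredProb_one
      (hG.preconnected.degree_pos_of_nontrivial r) (by omega)) hsum,
    hsum.tsum_lt_tsum (i := 0) (fun t => hn' ▸ G.uncoveredProb_le_mul_uncoveredCost r t) ?_
      (hsumc.mul_left _)⟩
  rw [G.uncoveredProb_zero hsingle, G.uncoveredCost_zero hsingle, mul_one]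
  exact_mod_cast hn
end
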